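/- arXiv:1604.04219 — 2 statements merged into one kernel-verified Lean document; each statement's English description precedes it below -/
import Mathlib

section
/- Let A be a unital *-algebra, N ≥ 1, and let x_1, …, x_N ∈ A satisfy ∑_i x_i x_i* = 1, ∑_i x_i* x_i = 1, and ∑_{i,j} x_i x_j x_i* x_j* = 1. Then x_i x_j = x_j x_i for all i, j. -/
theorem stmt_4 {A : Type*} [NormedRing A] [StarRing A] [CStarRing A]
    [NormedAlgebra ℂ A] [StarModule ℂ A] [CompleteSpace A]
    {N : ℕ} (hN : 1 ≤ N) (x : Fin N → A)
    (h1 : ∑ i, x i * star (x i) = 1)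
    (h2 : ∑ i, star (x i) * x i = 1)
    (h3 : ∑ i, ∑ j, x i * x j * star (x i) * star (x j) = 1) :
    ∀ i j, x i * x j = x j * x i := by
  letI : CStarAlgebra A := {}
  letI := CStarAlgebra.spectralOrder A
  haveI := CStarAlgebra.spectralOrderedRing A
  set c : Fin N → Fin N → A := fun i j => x i * x j - x j * x i with hc
  have key : ∑ i, ∑ j, c i j * star (c i j) = 0 := by
    have e1 : ∑ i : Fin N, ∑ j : Fin N, x i * x j * (star (x j) * star (x i)) = 1 := by
      have : ∀ i : Fin N, ∑ j : Fin N, x i * x j * (star (x j) * star (x i))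
          = x i * star (x i) := by
        intro i
        rw [show ∑ j : Fin N, x i * x j * (star (x j) * star (x i))
            = x i * (∑ j : Fin N, x j * star (x j)) * star (x i) by
          rw [Finset.mul_sum, Finset.sum_mul]; congr 1; ext j; noncomm_ring]
        rw [h1, mul_one]
      simp_rw [this]; exact h1
    have e2 : ∑ i : Fin N, ∑ j : Fin N, x j * x i * (star (x i) * star (x j)) = 1 := by
      rw [Finset.sum_comm]
      have : ∀ j : Fin N, ∑ i : Fin N, x j * x i * (star (x i) * star (x j))
          = x j * star (x j) := by
        intro j
        rw [show ∑ i : Fin N, x j * x i * (star (x i) * star (x j))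
            = x j * (∑ i : Fin N, x i * star (x i)) * star (x j) by
          rw [Finset.mul_sum, Finset.sum_mul]; congr 1; ext i; noncomm_ring]
        rw [h1, mul_one]
      simp_rw [this]; exact h1
    have e3 : ∑ i : Fin N, ∑ j : Fin N, x i * x j * (star (x i) * star (x j)) = 1 := by
      rw [← h3]; congr 1; ext i; congr 1; ext j; noncomm_ring
    have e4 : ∑ i : Fin N, ∑ j : Fin N, x j * x i * (star (x j) * star (x i)) = 1 := by
      rw [Finset.sum_comm, ← h3]; congr 1; ext i; congr 1; ext j; noncomm_ring
    have expand : ∀ i j, c i j * star (c i j)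
        = x i * x j * (star (x j) * star (x i)) - x i * x j * (star (x i) * star (x j))
          - x j * x i * (star (x j) * star (x i)) + x j * x i * (star (x i) * star (x j)) := by
      intro i j
      simp only [hc, star_sub, star_mul]
      noncomm_ring
    simp_rw [expand, Finset.sum_add_distrib, Finset.sum_sub_distrib]
    rw [e1, e2, e3, e4]
    abel
  have hz : ∀ i ∈ Finset.univ, ∀ j ∈ Finset.univ, c i j * star (c i j) = 0 := by
    have h0 : ∀ i ∈ (Finset.univ : Finset (Fin N)),
        ∑ j, c i j * star (c i j) = 0 := by
      rw [← Finset.sum_eq_zero_iff_of_nonneg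
        (fun i _ => Finset.sum_nonneg fun j _ => mul_star_self_nonneg (c i j))]
      exact key
    intro i hi j hj
    exact (Finset.sum_eq_zero_iff_of_nonneg
      (fun j _ => mul_star_self_nonneg (c i j))).mp (h0 i hi) j hj
  intro i j
  have := (CStarRing.mul_star_self_eq_zero_iff (c i j)).mp
    (hz i (Finset.mem_univ i) j (Finset.mem_univ j))
  simpa [hc, sub_eq_zero] using this
end

section
/- Let A be a unital C*-algebra, N ≥ 1, and let x_1, …, x_N ∈ A satisfy ∑_i x_i x_i* = 1, ∑_i x_i* x_i = 1, x_i x_j = x_j x_i for all i, j, and ∑_{i,j} x_i x_j x_i* x_j* = 1. Then x_i x_j* = x_j* x_i for all i, j; in particular the C*-algebra generated by x_1,…,x_N is commutative. -/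
/-!
Put `y i j = x i * star (x j) - star (x j) * x i`. Expanding `∑ i j, star (y i j) * y i j` and
using that the `x i` commute (hence so do the `star (x i)`), each of the four resulting double
sums collapses, via the two sphere relations, to `1`, with signs `+ - - +`. A vanishing sum of
elements `star a * a` in a C⋆-algebra has all terms zero, so every `y i j = 0`. Then the generators
commute with each other and with their adjoints, so the closed star subalgebra they generate lies
in the double centralizer of the generators and their adjoints, which is commutative.
-/

open Finset

theorem CStarRing.eq_zero_of_sum_star_mul_self_eq_zero {A ι : Type*} [NonUnitalCStarAlgebra A]
    {s : Finset ι} {f : ι → A} (h : ∑ i ∈ s, star (f i) * f i = 0) {i : ι} (hi : i ∈ s) :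
    f i = 0 := by
  let _ := CStarAlgebra.spectralOrder A
  have _ := CStarAlgebra.spectralOrderedRing A
  have hfi := (sum_eq_zero_iff_of_nonneg fun j _ ↦ star_mul_self_nonneg (f j)).mp h i hi
  exact (CStarRing.star_mul_self_eq_zero_iff _).mp hfi

theorem StarSubalgebra.mul_comm_of_mem_topologicalClosure_adjoin {R A : Type*} [CommSemiring R]
    [StarRing R] [TopologicalSpace A] [Semiring A] [Algebra R A] [StarRing A] [StarModule R A]
    [IsSemitopologicalSemiring A] [ContinuousStar A] [T2Space A] {s : Set A}
    (hcomm : ∀ a ∈ s, ∀ b ∈ s, a * b = b * a)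
    (hcomm_star : ∀ a ∈ s, ∀ b ∈ s, a * star b = star b * a) {a b : A}
    (ha : a ∈ (StarAlgebra.adjoin R s).topologicalClosure)
    (hb : b ∈ (StarAlgebra.adjoin R s).topologicalClosure) : a * b = b * a := by
  have hcomm' : ∀ a ∈ s ∪ star s, ∀ b ∈ s ∪ star s, a * b = b * a := fun a ha b hb ↦
    Set.union_star_self_comm (fun _ ha _ hb ↦ hcomm _ hb _ ha)
      (fun _ ha _ hb ↦ hcomm_star _ hb _ ha) b hb a ha
  have hle := topologicalClosure_adjoin_le_centralizer_centralizer R s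
  replace ha := hle ha
  replace hb := hle hb
  rw [← SetLike.mem_coe, coe_centralizer_centralizer] at ha hb
  exact Set.centralizer_centralizer_comm_of_comm hcomm' _ ha _ hb

section Commutator

variable {R ι : Type*} [Ring R] [StarRing R] (x : ι → R)

theorem star_commutator_mul_self_eq (hcomm : ∀ i j, x i * x j = x j * x i) (i j : ι) :
    star (x i * star (x j) - star (x j) * x i) * (x i * star (x j) - star (x j) * x i) =
      x j * (star (x i) * x i) * star (x j) - x j * star (x j) * (star (x i) * x i)
        - star (x i) * x i * (x j * star (x j)) + star (x i) * (x j * star (x j)) * x i := by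
  have hstar : star (x i) * star (x j) = star (x j) * star (x i) := by
    simpa only [star_mul] using congrArg star (hcomm j i)
  simp only [star_sub, star_mul, star_star, sub_mul, mul_sub, mul_assoc]
  rw [← mul_assoc (star (x i)) (star (x j)), hstar, ← mul_assoc (x j) (x i), hcomm j i]
  simp only [mul_assoc]
  abel

theorem sum_star_commutator_mul_self_eq_zero [Fintype ι] (h1 : ∑ i, x i * star (x i) = 1)
    (h2 : ∑ i, star (x i) * x i = 1) (hcomm : ∀ i j, x i * x j = x j * x i) :
    ∑ i, ∑ j, star (x i * star (x j) - star (x j) * x i) * (x i * star (x j) - star (x j) * x i)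
      = 0 := by
  simp only [star_commutator_mul_self_eq x hcomm, sum_add_distrib, sum_sub_distrib]
  rw [sum_comm (f := fun i j ↦ x j * (star (x i) * x i) * star (x j))]
  simp only [← mul_sum, ← sum_mul, h1, h2, mul_one, one_mul]
  abel

end Commutator

theorem stmt_5_general {A : Type*} [NormedRing A] [StarRing A] [CStarRing A]
    [NormedAlgebra ℂ A] [StarModule ℂ A] [CompleteSpace A]
    {N : ℕ} (x : Fin N → A)
    (h1 : ∑ i, x i * star (x i) = 1)
    (h2 : ∑ i, star (x i) * x i = 1)
    (hcomm : ∀ i j, x i * x j = x j * x i) :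
    (∀ i j, x i * star (x j) = star (x j) * x i) ∧
    ∀ a ∈ (StarAlgebra.adjoin ℂ (Set.range x)).topologicalClosure,
      ∀ b ∈ (StarAlgebra.adjoin ℂ (Set.range x)).topologicalClosure, a * b = b * a := by
  have key : ∀ i j, x i * star (x j) = star (x j) * x i := by
    let _ : CStarAlgebra A := {}
    intro i j
    have h := sum_star_commutator_mul_self_eq_zero x h1 h2 hcomm
    rw [← Fintype.sum_prod_type'] at h
    exact sub_eq_zero.mp (CStarRing.eq_zero_of_sum_star_mul_self_eq_zero h (mem_univ (i, j)))
  refine ⟨key, fun a ha b hb ↦ StarSubalgebra.mul_comm_of_mem_topologicalClosure_adjoin ?_ ?_ ha hb⟩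
  · rintro _ ⟨i, rfl⟩ _ ⟨j, rfl⟩
    exact hcomm i j
  · rintro _ ⟨i, rfl⟩ _ ⟨j, rfl⟩
    exact key i j

theorem stmt_5 {A : Type*} [NormedRing A] [StarRing A] [CStarRing A]
    [NormedAlgebra ℂ A] [StarModule ℂ A] [CompleteSpace A]
    {N : ℕ} (hN : 1 ≤ N) (x : Fin N → A)
    (h1 : ∑ i, x i * star (x i) = 1)
    (h2 : ∑ i, star (x i) * x i = 1)
    (hcomm : ∀ i j, x i * x j = x j * x i)
    (h3 : ∑ i, ∑ j, x i * x j * star (x i) * star (x j) = 1) :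
    (∀ i j, x i * star (x j) = star (x j) * x i) ∧
    ∀ a ∈ (StarAlgebra.adjoin ℂ (Set.range x)).topologicalClosure,
      ∀ b ∈ (StarAlgebra.adjoin ℂ (Set.range x)).topologicalClosure, a * b = b * a :=
  stmt_5_general x h1 h2 hcomm
end
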